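/- arXiv:2404.16163 — 2 statements merged into one kernel-verified Lean document; each statement's English description precedes it below -/
import Mathlib

section
/- (Equivalence of Bellman equations (1) and (2)) Let M_N be an MDPST and V : S → ℝ. For every state s, max_{a ∈ A(s)} min_{h ∈ H_s^a} Σ_{s' ∈ S} h(s') V(s') = max_{a ∈ A(s)} Σ_{Θ ∈ F(s,a)} T_N(s,a,Θ) · min_{s' ∈ Θ} V(s'), where H_s^a is the set of feasible distributions of (s,a). -/
open scoped Classical

/-- Equivalence of Bellman equations (1) and (2): for an MDPST and any
`V : S → ℝ` and state `s`, the max over `a ∈ A(s)` of the min over the feasible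
distributions `h ∈ H_s^a` (the distributions `h_α(s') = Σ_{Θ ∈ F(s,a) : α Θ = s'}
T_N(s,a,Θ)` induced by selections `α`) of `Σ_{s'} h(s') V(s')` equals the max over
`a ∈ A(s)` of `Σ_{Θ ∈ F(s,a)} T_N(s,a,Θ) · min_{s' ∈ Θ} V(s')`. -/
theorem stmt9 {S A P : Type*} [Fintype S] [Fintype A] [DecidableEq S] [DecidableEq A]
    (s0 : S) (Aset : S → Finset A) (hA : ∀ s, (Aset s).Nonempty)
    (F : S → A → Finset (Finset S))
    (hF : ∀ s a, a ∈ Aset s → (F s a).Nonempty)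
    (hFne : ∀ s a, a ∈ Aset s → ∀ Θ ∈ F s a, Θ.Nonempty)
    (TN : S → A → Finset S → ℝ)
    (hTN0 : ∀ s a, a ∈ Aset s → ∀ Θ ∈ F s a, 0 ≤ TN s a Θ)
    (hTNsum : ∀ s a, a ∈ Aset s → ∑ Θ ∈ F s a, TN s a Θ = 1)
    (L : S → Set P)
    (V : S → ℝ) (s : S) :
    ((Aset s).attach.sup' ((hA s).attach) (fun a =>
        sInf {x : ℝ | ∃ α : Finset S → S, (∀ Θ ∈ F s a.1, α Θ ∈ Θ) ∧
          x = ∑ s' : S, (∑ Θ ∈ (F s a.1).filter (fun Θ => α Θ = s'), TN s a.1 Θ) * V s'}))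
    = ((Aset s).attach.sup' ((hA s).attach) (fun a =>
        ∑ Θ ∈ (F s a.1).attach, TN s a.1 Θ.1 * Θ.1.inf' (hFne s a.1 a.2 Θ.1 Θ.2) V)) := by
  refine Finset.sup'_congr _ rfl ?_
  intro a _
  -- the target value
  set m : ℝ := ∑ Θ ∈ (F s a.1).attach, TN s a.1 Θ.1 * Θ.1.inf' (hFne s a.1 a.2 Θ.1 Θ.2) V
    with hm
  -- regrouping lemma
  have regroup : ∀ α : Finset S → S, (∀ Θ ∈ F s a.1, α Θ ∈ Θ) →
      (∑ s' : S, (∑ Θ ∈ (F s a.1).filter (fun Θ => α Θ = s'), TN s a.1 Θ) * V s')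
        = ∑ Θ ∈ F s a.1, TN s a.1 Θ * V (α Θ) := by
    intro α hα
    rw [← Finset.sum_fiberwise (F s a.1) α (fun Θ => TN s a.1 Θ * V (α Θ))]
    refine Finset.sum_congr rfl fun s' _ => ?_
    rw [Finset.sum_mul]
    refine Finset.sum_congr rfl fun Θ hΘ => ?_
    rw [(Finset.mem_filter.mp hΘ).2]
  -- the optimal selection
  have hαstar : ∃ α : Finset S → S, (∀ Θ ∈ F s a.1, α Θ ∈ Θ) ∧
      ∀ Θ (h : Θ ∈ F s a.1), V (α Θ) = Θ.inf' (hFne s a.1 a.2 Θ h) V := by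
    have key : ∀ Θ : Finset S, ∃ x : S, Θ ∈ F s a.1 →
        x ∈ Θ ∧ ∀ h : Θ ∈ F s a.1, V x = Θ.inf' (hFne s a.1 a.2 Θ h) V := by
      intro Θ
      by_cases h : Θ ∈ F s a.1
      · obtain ⟨b, hb, hbe⟩ := Finset.exists_mem_eq_inf' (hFne s a.1 a.2 Θ h) V
        exact ⟨b, fun _ => ⟨hb, fun _ => hbe.symm⟩⟩
      · exact ⟨s, fun h' => absurd h' h⟩
    choose α hαs using key
    exact ⟨α, fun Θ h => (hαs Θ h).1, fun Θ h => (hαs Θ h).2 h⟩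
  obtain ⟨αst, hαstmem, hαstval⟩ := hαstar
  have hmval : m = ∑ Θ ∈ F s a.1, TN s a.1 Θ * V (αst Θ) := by
    rw [hm, ← Finset.sum_attach (F s a.1) (fun Θ => TN s a.1 Θ * V (αst Θ))]
    exact Finset.sum_congr rfl fun Θ _ => by rw [hαstval Θ.1 Θ.2]
  have hmem : m ∈ {x : ℝ | ∃ α : Finset S → S, (∀ Θ ∈ F s a.1, α Θ ∈ Θ) ∧
      x = ∑ s' : S, (∑ Θ ∈ (F s a.1).filter (fun Θ => α Θ = s'), TN s a.1 Θ) * V s'} :=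
    ⟨αst, hαstmem, by rw [regroup αst hαstmem, hmval]⟩
  have hlb : ∀ x ∈ {x : ℝ | ∃ α : Finset S → S, (∀ Θ ∈ F s a.1, α Θ ∈ Θ) ∧
      x = ∑ s' : S, (∑ Θ ∈ (F s a.1).filter (fun Θ => α Θ = s'), TN s a.1 Θ) * V s'},
      m ≤ x := by
    rintro x ⟨α, hα, rfl⟩
    rw [regroup α hα, hmval]
    refine Finset.sum_le_sum fun Θ hΘ => ?_
    refine mul_le_mul_of_nonneg_left ?_ (hTN0 s a.1 a.2 Θ hΘ)
    rw [hαstval Θ hΘ]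
    exact Finset.inf'_le V (hα Θ hΘ)
  exact le_antisymm (csInf_le ⟨m, hlb⟩ hmem) (le_csInf ⟨m, hmem⟩ hlb)
end

section
/- Fix a nondeterministic domain N, action-instruction errors E, and an agent strategy σ. An infinite state sequence s_0 s_1 s_2 … with s_0 the initial state is the state projection of a perturbed path of N under σ, E, and some environment strategy (i.e., for every i there is an actually instructed action a'_i ∈ supp(s_i, σ(s_0…s_i)) with s_{i+1} ∈ F_n(s_i, a'_i)) if and only if, in the MDPST induced by (N, E), s_{i+1} ∈ Post(s_i, σ(s_0…s_i)) for every i, i.e., it is a path of the induced MDPST under σ that has positive one-step probability under some nature. -/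
open scoped ENNReal Classical

/-- The finite state history `s_0 … s_i` of an infinite state sequence `ρ`. -/
def stateHist {S : Type*} (ρ : ℕ → S) (i : ℕ) : List S :=
  (List.range (i + 1)).map ρ

/-- The mass assignment of the MDPST induced by a nondeterministic domain and
action-instruction errors: `T_N(s,a,Θ) = Σ_{a' ∈ A(s), F_n(s,a') = Θ} err(s,a)(a')`. -/
noncomputable def inducedTN {S A : Type*} [DecidableEq S] (Aset : S → Finset A)
    (Fn : S → A → Finset S) (err : S → A → PMF A) (s : S) (a : A)
    (Θ : Finset S) : ℝ≥0∞ :=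
  ∑ a' ∈ (Aset s).filter (fun a' => Fn s a' = Θ), err s a a'

/-- `Post(s,a)`: the union of all `Θ ∈ F(s,a) = {F_n(s,a') : a' ∈ A(s)}` with
`T_N(s,a,Θ) > 0`. -/
noncomputable def postSet {S A : Type*} [DecidableEq S] (Aset : S → Finset A)
    (Fn : S → A → Finset S) (err : S → A → PMF A) (s : S) (a : A) : Finset S :=
  (((Aset s).image (Fn s)).filter (fun Θ => 0 < inducedTN Aset Fn err s a Θ)).biUnion id

/-- An infinite state sequence starting at the initial state is the state
projection of a perturbed path of the nondeterministic domain `N` under strategy `σ`,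
errors `E`, and some environment strategy, iff in the MDPST induced by `(N, E)` each
step satisfies `s_{i+1} ∈ Post(s_i, σ(s_0…s_i))`, i.e. it is a path of the induced
MDPST under `σ` having positive one-step probability under some nature. -/
theorem stmt11 {S A : Type*} [Fintype S] [Fintype A] [DecidableEq S] [DecidableEq A]
    (s0 : S) (Aset : S → Finset A) (hA : ∀ s, (Aset s).Nonempty)
    (Fn : S → A → Finset S)
    (hFn : ∀ s a, a ∈ Aset s → (Fn s a).Nonempty)
    (err : S → A → PMF A)
    (hsupp : ∀ s a, a ∈ Aset s → (err s a).support ⊆ ↑(Aset s))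
    (σ : List S → A)
    (hσ : ∀ (l : List S) (s : S), σ (l ++ [s]) ∈ Aset s)
    (ρ : ℕ → S) (h0 : ρ 0 = s0) :
    (∀ i : ℕ, ∃ a' ∈ (err (ρ i) (σ (stateHist ρ i))).support,
        ρ (i + 1) ∈ Fn (ρ i) a') ↔
    (∀ i : ℕ, ρ (i + 1) ∈ postSet Aset Fn err (ρ i) (σ (stateHist ρ i))) := by
  have hhist : ∀ i, stateHist ρ i = (List.range i).map ρ ++ [ρ i] := by
    intro i
    simp [stateHist, List.range_succ]
  have hσA : ∀ i, σ (stateHist ρ i) ∈ Aset (ρ i) := by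
    intro i; rw [hhist i]; exact hσ _ _
  constructor
  · intro h i
    obtain ⟨a', ha', hmem⟩ := h i
    have haA : a' ∈ Aset (ρ i) := hsupp _ _ (hσA i) ha'
    simp only [postSet, Finset.mem_biUnion, Finset.mem_filter, Finset.mem_image, id]
    refine ⟨Fn (ρ i) a', ⟨⟨a', haA, rfl⟩, ?_⟩, hmem⟩
    have : (0:ℝ≥0∞) < err (ρ i) (σ (stateHist ρ i)) a' := by
      simpa [pos_iff_ne_zero, PMF.mem_support_iff] using ha'
    refine lt_of_lt_of_le this ?_
    exact Finset.single_le_sum (f := fun a'' => err (ρ i) (σ (stateHist ρ i)) a'')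
      (fun _ _ => zero_le) (by simp [haA])
  · intro h i
    have := h i
    simp only [postSet, Finset.mem_biUnion, Finset.mem_filter, Finset.mem_image, id] at this
    obtain ⟨Θ, ⟨_, hpos⟩, hmem⟩ := this
    have : ∃ b ∈ (Aset (ρ i)).filter (fun a' => Fn (ρ i) a' = Θ),
        err (ρ i) (σ (stateHist ρ i)) b ≠ 0 := by
      by_contra hc
      push_neg at hc
      have : inducedTN Aset Fn err (ρ i) (σ (stateHist ρ i)) Θ = 0 :=
        Finset.sum_eq_zero hc
      simp [this] at hpos
    obtain ⟨b, hb, hbne⟩ := this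
    simp only [Finset.mem_filter] at hb
    exact ⟨b, by simpa [PMF.mem_support_iff] using hbne, hb.2 ▸ hmem⟩
end
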